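/- arXiv:2011.09823 — 2 statements merged into one kernel-verified Lean document; each statement's English description precedes it below -/
import Mathlib

section
/- A spanning tree T on n vertices admits exactly (n-1) + C(n-1, 2) = C(n, 2) distinct nonempty edge sets of the form Δ_T(X) with |Δ_T(X)| ≤ 2, as X ranges over nontrivial subsets of V. More precisely, the map sending f ∈ E(T) ∪ E(T)^(2) to the unique cut shore (not containing a fixed root r) with Δ_T(shore(f)) = f is a bijection between E(T) ∪ E(T)^(2) and the set of nontrivial subsets X ⊆ V, r ∉ X, with 1 ≤ |Δ_T(X)| ≤ 2. -/
/-! Parity of crossings along walks does all the work. Every edge of `Δ(X)` switches sides, so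
a walk from `r ∉ X` ends in `X` iff it crosses `Δ(X)` an odd number of times; hence `X` is
recovered from `Δ(X)`. Conversely, in a tree any `F ⊆ E(T)` is `Δ(X)` for `X` the set of
vertices whose path from `r` crosses `F` an odd number of times, because the paths to the two
ends of an edge differ by that edge alone. So `X ↦ Δ(X)` is a bijection onto all edge sets,
and there are `C(n - 1, 1) + C(n - 1, 2) = C(n, 2)` of size one or two. -/

/-- `Δ_T(X)`: the set of edges of the graph `T` with exactly one endpoint in `X`. -/
def cutEdges {V : Type*} (T : SimpleGraph V) (X : Set V) : Set (Sym2 V) :=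
  {e | e ∈ T.edgeSet ∧ ∃ a b, e = s(a, b) ∧ a ∈ X ∧ b ∉ X}

namespace SimpleGraph

variable {V : Type*} {G : SimpleGraph V}

theorem mk_mem_cutEdges_iff {X : Set V} {a b : V} (hab : G.Adj a b) :
    s(a, b) ∈ cutEdges G X ↔ ¬(a ∈ X ↔ b ∈ X) := by
  simp only [cutEdges, Set.mem_ofPred_eq, mem_edgeSet, hab, true_and, Sym2.eq_iff]
  constructor
  · rintro ⟨c, d, (⟨rfl, rfl⟩ | ⟨rfl, rfl⟩), hc, hd⟩ <;> tauto
  · intro h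
    by_cases ha : a ∈ X
    · exact ⟨a, b, Or.inl ⟨rfl, rfl⟩, ha, by tauto⟩
    · exact ⟨b, a, Or.inr ⟨rfl, rfl⟩, by tauto, ha⟩

theorem cutEdges_subset_edgeSet (X : Set V) : cutEdges G X ⊆ G.edgeSet := fun _ he => he.1

@[simp]
theorem cutEdges_empty : cutEdges G ∅ = ∅ := by
  simp [cutEdges]

open scoped Classical in
theorem Walk.even_countP_cutEdges_iff {X : Set V} {u v : V} (w : G.Walk u v) :
    Even (w.edges.countP (· ∈ cutEdges G X)) ↔ (u ∈ X ↔ v ∈ X) := by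
  induction w with
  | nil => simp
  | @cons u u' v h q ih =>
    rw [edges_cons, List.countP_cons]
    by_cases hm : s(u, u') ∈ cutEdges G X
    · have := (mk_mem_cutEdges_iff h).1 hm
      simp only [hm, decide_true, if_true, Nat.even_add_one, ih]
      tauto
    · have := (mk_mem_cutEdges_iff h).not_left.1 hm
      simp only [hm, decide_false, Bool.false_eq_true, if_false, add_zero, ih]
      tauto

open scoped Classical in
theorem Walk.mem_iff_odd_countP_cutEdges {X : Set V} {r v : V} (hr : r ∉ X) (w : G.Walk r v) :
    v ∈ X ↔ Odd (w.edges.countP (· ∈ cutEdges G X)) := by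
  rw [← Nat.not_even_iff_odd, w.even_countP_cutEdges_iff]
  tauto

theorem Connected.injOn_cutEdges (hG : G.Connected) (r : V) :
    Set.InjOn (cutEdges G) {X | r ∉ X} := by
  classical
  intro X hX Y hY hXY
  ext v
  obtain ⟨w⟩ := hG r v
  rw [w.mem_iff_odd_countP_cutEdges hX, w.mem_iff_odd_countP_cutEdges hY, hXY]

theorem IsAcyclic.eq_concat_or_eq_concat (hG : G.IsAcyclic) {u v w : V} {p : G.Walk u v}
    {q : G.Walk u w} (hp : p.IsPath) (hq : q.IsPath) (hadj : G.Adj v w) :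
    q = p.concat hadj ∨ p = q.concat hadj.symm := by
  by_cases hw : w ∈ p.support
  · exact Or.inr (hG.path_concat hq hp hadj.symm hw)
  · exact Or.inl (hG.path_concat hp hq hadj
      (hG.mem_support_of_ne_mem_support_of_adj_of_isPath hq hp hadj.symm hw))

open scoped Classical in
theorem IsAcyclic.odd_countP_iff_odd_countP_iff (hG : G.IsAcyclic) (F : Set (Sym2 V))
    {u v w : V} {p : G.Walk u v} {q : G.Walk u w} (hp : p.IsPath) (hq : q.IsPath)
    (hadj : G.Adj v w) :
    (Odd (p.edges.countP (· ∈ F)) ↔ Odd (q.edges.countP (· ∈ F))) ↔ s(v, w) ∉ F := by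
  rcases hG.eq_concat_or_eq_concat hp hq hadj with rfl | rfl <;>
  · simp only [Walk.edges_concat, List.concat_eq_append, List.countP_append, List.countP_singleton,
      Sym2.eq_swap (a := w)]
    by_cases hF : s(v, w) ∈ F <;> simp [hF, Nat.odd_add_one, ← Nat.not_even_iff_odd]

theorem IsTree.exists_cutEdges_eq (hG : G.IsTree) (r : V) {F : Set (Sym2 V)}
    (hF : F ⊆ G.edgeSet) : ∃ X, r ∉ X ∧ cutEdges G X = F := by
  classical
  choose p hp _ using hG.existsUnique_path r
  refine ⟨{v | Odd ((p v).edges.countP (· ∈ F))}, ?_, ?_⟩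
  · have : p r = .nil := (hG.existsUnique_path r r).unique (hp r) .nil
    simp [this]
  ext e
  induction e using Sym2.ind with
  | _ a b =>
    by_cases hab : G.Adj a b
    · rw [mk_mem_cutEdges_iff hab, Set.mem_ofPred_eq, Set.mem_ofPred_eq,
        hG.isAcyclic.odd_countP_iff_odd_countP_iff F (hp a) (hp b) hab, not_not]
    · exact iff_of_false (fun h => hab (cutEdges_subset_edgeSet _ h)) (fun h => hab (hF h))

end SimpleGraph

theorem Set.ncard_subsets_ncard_eq_one_or_two {α : Type*} {s : Set α} (hs : s.Finite) :
    {t ⊆ s | t.ncard = 1 ∨ t.ncard = 2}.ncard = (s.ncard + 1).choose 2 := by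
  have hfin (k : ℕ) : {t ⊆ s | t.ncard = k}.Finite :=
    hs.finite_subsets.subset fun t ht => ht.1
  have hdisj : Disjoint {t ⊆ s | t.ncard = 1} {t ⊆ s | t.ncard = 2} :=
    Set.disjoint_left.2 fun t h1 h2 => absurd (h1.2.symm.trans h2.2) (by norm_num)
  have hsplit : {t ⊆ s | t.ncard = 1 ∨ t.ncard = 2} =
      {t ⊆ s | t.ncard = 1} ∪ {t ⊆ s | t.ncard = 2} :=
    Set.ext fun _ => and_or_left
  rw [hsplit, Set.ncard_union_eq hdisj (hfin 1) (hfin 2), ncard_powerset_ncard hs,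
    ncard_powerset_ncard hs, Nat.choose_succ_succ, Nat.choose_one_right]

theorem stmt_5_general {V : Type*} [Fintype V] (T : SimpleGraph V) (hT : T.IsTree)
    (r : V) :
    -- the map `X ↦ Δ_T(X)` is a bijection between the nontrivial shores `X` with `r ∉ X`
    -- and `1 ≤ |Δ_T(X)| ≤ 2`, and the family `E(T) ∪ E(T)^(2)` of nonempty edge sets of
    -- size at most 2 (so `shore` is its inverse bijection)
    Set.BijOn (fun X : Set V => cutEdges T X)
      {X : Set V | X ≠ ∅ ∧ X ≠ Set.univ ∧ r ∉ X ∧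
        1 ≤ (cutEdges T X).ncard ∧ (cutEdges T X).ncard ≤ 2}
      {F : Set (Sym2 V) | F ⊆ T.edgeSet ∧ (F.ncard = 1 ∨ F.ncard = 2)} ∧
    -- and there are exactly `C(n, 2)` such edge sets
    Set.ncard {F : Set (Sym2 V) | F ⊆ T.edgeSet ∧ (F.ncard = 1 ∨ F.ncard = 2)} =
      (Fintype.card V).choose 2 := by
  classical
  refine ⟨⟨?_, ?_, ?_⟩, ?_⟩
  · rintro X ⟨-, -, -, h1, h2⟩
    exact ⟨SimpleGraph.cutEdges_subset_edgeSet X, by dsimp only; omega⟩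
  · exact (hT.connected.injOn_cutEdges r).mono fun X hX => hX.2.2.1
  · rintro F ⟨hF, hcard⟩
    obtain ⟨X, hr, rfl⟩ := hT.exists_cutEdges_eq r hF
    refine ⟨X, ⟨?_, ?_, hr, ?_, ?_⟩, rfl⟩
    · rintro rfl
      simp at hcard
    · rintro rfl
      exact hr (Set.mem_univ r)
    all_goals omega
  · rw [Set.ncard_subsets_ncard_eq_one_or_two T.edgeSet.toFinite, ← hT.card_edgeFinset,
      ← SimpleGraph.coe_edgeFinset, Set.ncard_coe_finset]

theorem stmt_5 {V : Type*} [Fintype V] (T : SimpleGraph V) (hT : T.IsTree)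
    (r : V) (hn : 2 ≤ Fintype.card V) :
    -- the map `X ↦ Δ_T(X)` is a bijection between the nontrivial shores `X` with `r ∉ X`
    -- and `1 ≤ |Δ_T(X)| ≤ 2`, and the family `E(T) ∪ E(T)^(2)` of nonempty edge sets of
    -- size at most 2 (so `shore` is its inverse bijection)
    Set.BijOn (fun X : Set V => cutEdges T X)
      {X : Set V | X ≠ ∅ ∧ X ≠ Set.univ ∧ r ∉ X ∧
        1 ≤ (cutEdges T X).ncard ∧ (cutEdges T X).ncard ≤ 2}
      {F : Set (Sym2 V) | F ⊆ T.edgeSet ∧ (F.ncard = 1 ∨ F.ncard = 2)} ∧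
    -- and there are exactly `C(n, 2)` such edge sets
    Set.ncard {F : Set (Sym2 V) | F ⊆ T.edgeSet ∧ (F.ncard = 1 ∨ F.ncard = 2)} =
      (Fintype.card V).choose 2 :=
  stmt_5_general T hT r
end

section
/- Let x ∈ {0,1}^N with the natural association to a weighted bipartite graph structure as follows: for sets X = {x : |x| = ⌊n/8⌋ − 1} and Y = {x : |x| = ⌊n/8⌋ + 1} of strings in {0,1}^{n/4} (with n ≥ 8 a multiple of 4), and tuple x = (x^(1),...,x^(3n/4)) ∈ (X ∪ Y)^{3n/4}, define the bipartite graph G_x on L ⊔ R with |L| = 3n/4, |R| = n/4, and weights w_x({i, j}) = 1 + ε·x^(i)(j − 3n/4) ∈ {1, 1+ε} for i ∈ L, j ∈ R, where 0 < ε ≤ 1. Then: λ(G_x) = n/4 + ε(⌊n/8⌋ + 1) if all x^(i) ∈ Y, and λ(G_x) = n/4 + ε(⌊n/8⌋ − 1) if some x^(i) ∈ X. In particular, λ(G_x) determines whether all blocks x^(i) have Hamming weight ⌊n/8⌋+1 or some block has Hamming weight ⌊n/8⌋−1. -/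
open Classical in
/-- The weight of the cut with shore `X` in the weighted graph `(V, w)`. -/
noncomputable def cutWeight {V : Type*} [Fintype V] (w : V → V → ℝ) (X : Set V) : ℝ :=
  ∑ u : V, ∑ v : V, if u ∈ X ∧ v ∉ X then w u v else 0

/-!
Every edge between `L` and `R = Lᶜ` weighs at least `1`, so comparing `w` with the complete
bipartite graph on `L ⊔ R`, a cut `Z` weighs at least `|L ∩ Z|·|R \ Z| + |R ∩ Z|·|L \ Z|`.
When `2|R| ≤ |L|` this count is at least `2|R|` unless `Z` or `Zᶜ` is a single vertex `i ∈ L`,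
whose star cut weighs `|R| + ε|S i| ≤ 2|R|`. Hence `λ = |R| + ε · min_{i ∈ L} |S i|`.
-/

open Classical Finset

section

variable {V : Type*}

noncomputable def completeBipartiteWeight (L : Set V) (u v : V) : ℝ :=
  if (u ∈ L ↔ v ∉ L) then 1 else 0

lemma completeBipartiteWeight_le {L : Set V} {w : V → V → ℝ} (hsymm : ∀ u v, w u v = w v u)
    (hw0 : ∀ u v, 0 ≤ w u v) (hw1 : ∀ u ∈ L, ∀ v ∉ L, 1 ≤ w u v) (u v : V) :
    completeBipartiteWeight L u v ≤ w u v := by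
  unfold completeBipartiteWeight
  split_ifs with h
  · by_cases hu : u ∈ L
    · exact hw1 u hu v (h.1 hu)
    · exact hsymm u v ▸ hw1 v (not_not.1 (mt h.2 hu)) u hu
  · exact hw0 u v

variable [Fintype V]

lemma sum_ite_mem_eq_ncard_mul (s : Set V) [DecidablePred (· ∈ s)] (c : ℝ) :
    ∑ u : V, (if u ∈ s then c else 0) = s.ncard * c := by
  rw [Finset.sum_ite, sum_const_zero, add_zero, sum_const, nsmul_eq_mul,
    Set.ncard_eq_toFinset_card']
  congr 3
  ext; simp

lemma cutWeight_mono {w w' : V → V → ℝ} (h : ∀ u v, w u v ≤ w' u v) (Z : Set V) :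
    cutWeight w Z ≤ cutWeight w' Z := by
  unfold cutWeight
  gcongr with u _ v _
  split_ifs
  exacts [h u v, le_rfl]

lemma cutWeight_compl {w : V → V → ℝ} (hsymm : ∀ u v, w u v = w v u) (Z : Set V) :
    cutWeight w Zᶜ = cutWeight w Z := by
  unfold cutWeight
  rw [Finset.sum_comm]
  refine sum_congr rfl fun u _ => sum_congr rfl fun v _ => ?_
  by_cases hu : u ∈ Z <;> by_cases hv : v ∈ Z <;> simp [hu, hv, hsymm v u]

lemma cutWeight_singleton {w : V → V → ℝ} {i : V} (hi : w i i = 0) :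
    cutWeight w {i} = ∑ v, w i v := by
  unfold cutWeight
  rw [sum_eq_single i (fun u _ hu => by simp [hu]) (by simp)]
  exact sum_congr rfl fun v _ => by by_cases hv : v = i <;> simp [hv, hi]

lemma cutWeight_completeBipartiteWeight (L Z : Set V) :
    cutWeight (completeBipartiteWeight L) Z =
      (L ∩ Z).ncard * (Lᶜ \ Z).ncard + (Lᶜ ∩ Z).ncard * (L \ Z).ncard := by
  have hrow : ∀ u, (∑ v, if u ∈ Z ∧ v ∉ Z then completeBipartiteWeight L u v else 0) =
      (if u ∈ L ∩ Z then ((Lᶜ \ Z).ncard : ℝ) else 0) +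
        (if u ∈ Lᶜ ∩ Z then ((L \ Z).ncard : ℝ) else 0) := by
    intro u
    by_cases hu : u ∈ Z
    · by_cases huL : u ∈ L
      · rw [if_pos ⟨huL, hu⟩, if_neg (fun h => h.1 huL), add_zero, ← mul_one ((Lᶜ \ Z).ncard : ℝ),
          ← sum_ite_mem_eq_ncard_mul]
        refine sum_congr rfl fun v _ => ?_
        by_cases hv : v ∈ Z <;> by_cases hvL : v ∈ L <;> simp [completeBipartiteWeight, *]
      · rw [if_neg (fun h => huL h.1), if_pos ⟨huL, hu⟩, zero_add, ← mul_one ((L \ Z).ncard : ℝ),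
          ← sum_ite_mem_eq_ncard_mul]
        refine sum_congr rfl fun v _ => ?_
        by_cases hv : v ∈ Z <;> by_cases hvL : v ∈ L <;> simp [completeBipartiteWeight, *]
    · simp [hu]
  unfold cutWeight
  simp only [hrow, sum_add_distrib, sum_ite_mem_eq_ncard_mul]

lemma cross_count_cases {a a' b b' : ℕ} (hLR : 2 * (b + b') ≤ a + a') (hZ : 1 ≤ a + b)
    (hZc : 1 ≤ a' + b') :
    (a = 1 ∧ b = 0) ∨ (a' = 1 ∧ b' = 0) ∨ 2 * (b + b') ≤ a * b' + b * a' := by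
  rcases Nat.eq_zero_or_pos b with hb | hb <;> rcases Nat.eq_zero_or_pos b' with hb' | hb'
  · omega
  · subst hb
    rcases (by omega : a = 1 ∨ 2 ≤ a) with ha | ha
    · exact .inl ⟨ha, rfl⟩
    · exact .inr (.inr (by nlinarith))
  · subst hb'
    rcases (by omega : a' = 1 ∨ 2 ≤ a') with ha' | ha'
    · exact .inr (.inl ⟨ha', rfl⟩)
    · exact .inr (.inr (by nlinarith))
  · exact .inr (.inr (by nlinarith))

lemma eq_singleton_of_ncard_inter {L Z : Set V} (hL : (L ∩ Z).ncard = 1)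
    (hR : (Lᶜ ∩ Z).ncard = 0) : ∃ i ∈ L, Z = {i} := by
  obtain ⟨i, hi⟩ := Set.ncard_eq_one.1 hL
  have hRZ : Lᶜ ∩ Z = ∅ := (Set.ncard_eq_zero (Set.toFinite _)).1 hR
  have hiL : i ∈ L ∩ Z := hi ▸ rfl
  refine ⟨i, hiL.1, ?_⟩
  calc Z = Z ∩ L ∪ Z ∩ Lᶜ := (Set.inter_union_compl Z L).symm
    _ = {i} := by rw [Set.inter_comm, hi, Set.inter_comm, hRZ, Set.union_empty]

lemma ncard_inter_add_ncard_compl_inter (L Z : Set V) :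
    (L ∩ Z).ncard + (Lᶜ ∩ Z).ncard = Z.ncard := by
  rw [Set.inter_comm L, Set.inter_comm Lᶜ, ← Set.sdiff_eq, Set.ncard_inter_add_ncard_sdiff_eq_ncard]

theorem exists_star_or_two_mul_le_cutWeight {L : Set V} (hLR : 2 * Lᶜ.ncard ≤ L.ncard)
    {w : V → V → ℝ} (hsymm : ∀ u v, w u v = w v u) (hw0 : ∀ u v, 0 ≤ w u v)
    (hw1 : ∀ u ∈ L, ∀ v ∉ L, 1 ≤ w u v) {Z : Set V} (hZ : Z ≠ ∅) (hZc : Z ≠ Set.univ) :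
    (∃ i ∈ L, Z = {i} ∨ Zᶜ = {i}) ∨ 2 * (Lᶜ.ncard : ℝ) ≤ cutWeight w Z := by
  have hLcard := Set.ncard_inter_add_ncard_sdiff_eq_ncard L Z
  have hRcard := Set.ncard_inter_add_ncard_sdiff_eq_ncard Lᶜ Z
  have hZcard : 0 < Z.ncard := (Set.ncard_pos (Set.toFinite Z)).2 (Set.nonempty_iff_ne_empty.2 hZ)
  have hZccard : 0 < Zᶜ.ncard := (Set.ncard_pos (Set.toFinite _)).2 (Set.nonempty_compl.2 hZc)
  rw [← ncard_inter_add_ncard_compl_inter L] at hZcard hZccard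
  rw [← Set.sdiff_eq, ← Set.sdiff_eq] at hZccard
  rcases cross_count_cases (by omega) hZcard hZccard with ⟨ha, hb⟩ | ⟨ha', hb'⟩ | hcross
  · obtain ⟨i, hi, rfl⟩ := eq_singleton_of_ncard_inter ha hb
    exact .inl ⟨i, hi, .inl rfl⟩
  · obtain ⟨i, hi, hZi⟩ := eq_singleton_of_ncard_inter ha' hb'
    exact .inl ⟨i, hi, .inr hZi⟩
  · refine .inr (le_trans ?_ (cutWeight_mono (completeBipartiteWeight_le hsymm hw0 hw1) Z))
    rw [cutWeight_completeBipartiteWeight, ← hRcard]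
    exact_mod_cast hcross

section Bipartite

variable {L : Set V} {S : V → Set V} {w : V → V → ℝ} {ε : ℝ}

lemma cutWeight_singleton_of_mem (hSR : ∀ i ∈ L, S i ⊆ Lᶜ)
    (hinL : ∀ a ∈ L, ∀ b ∈ L, w a b = 0)
    (hcross : ∀ i ∈ L, ∀ j ∉ L, w i j = 1 + if j ∈ S i then ε else 0) {i : V} (hi : i ∈ L) :
    cutWeight w {i} = Lᶜ.ncard + ε * (S i).ncard := by
  have hrow : ∀ v, w i v = (if v ∈ Lᶜ then 1 else 0) + (if v ∈ S i then ε else 0) := by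
    intro v
    by_cases hv : v ∈ L
    · have hvS : v ∉ S i := fun h => hSR i hi h hv
      simp [hinL i hi v hv, hv, hvS]
    · simp [hcross i hi v hv, hv]
  rw [cutWeight_singleton (hinL i hi i hi)]
  simp only [hrow, sum_add_distrib, sum_ite_mem_eq_ncard_mul]
  ring

theorem isLeast_cutWeight (hLR : 2 * Lᶜ.ncard ≤ L.ncard) (hR : Lᶜ.Nonempty)
    (hε0 : 0 ≤ ε) (hε1 : ε ≤ 1) (hSR : ∀ i ∈ L, S i ⊆ Lᶜ)
    (hsymm : ∀ a b, w a b = w b a)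
    (hinL : ∀ a ∈ L, ∀ b ∈ L, w a b = 0)
    (hinR : ∀ a ∉ L, ∀ b ∉ L, w a b = 0)
    (hcross : ∀ i ∈ L, ∀ j ∉ L, w i j = 1 + if j ∈ S i then ε else 0)
    {k : ℕ} {i₀ : V} (hi₀ : i₀ ∈ L) (hk : (S i₀).ncard = k) (hmin : ∀ i ∈ L, k ≤ (S i).ncard) :
    IsLeast {y : ℝ | ∃ Z : Set V, Z ≠ ∅ ∧ Z ≠ Set.univ ∧ y = cutWeight w Z}
      (Lᶜ.ncard + ε * k) := by
  have hstar := fun {i} (hi : i ∈ L) => cutWeight_singleton_of_mem hSR hinL hcross hi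
  refine ⟨⟨{i₀}, Set.singleton_ne_empty i₀, ?_, by rw [hstar hi₀, hk]⟩, ?_⟩
  · obtain ⟨j, hj⟩ := hR
    exact fun h => (Set.eq_of_mem_singleton (h ▸ Set.mem_univ j : j ∈ ({i₀} : Set V)) ▸ hj) hi₀
  rintro _ ⟨Z, hZ, hZc, rfl⟩
  have hw1 : ∀ u ∈ L, ∀ v ∉ L, 1 ≤ w u v := fun u hu v hv => by
    rw [hcross u hu v hv]; split_ifs <;> linarith
  have hw0 : ∀ u v, 0 ≤ w u v := fun u v => by
    by_cases hu : u ∈ L <;> by_cases hv : v ∈ L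
    · exact (hinL u hu v hv).ge
    · exact zero_le_one.trans (hw1 u hu v hv)
    · exact zero_le_one.trans (hsymm u v ▸ hw1 v hv u hu)
    · exact (hinR u hu v hv).ge
  have hstar_le : ∀ i ∈ L, (Lᶜ.ncard : ℝ) + ε * k ≤ cutWeight w {i} := fun i hi => by
    rw [hstar hi]; gcongr; exact_mod_cast hmin i hi
  rcases exists_star_or_two_mul_le_cutWeight hLR hsymm hw0 hw1 hZ hZc with
    ⟨i, hi, rfl | hZi⟩ | hbig
  · exact hstar_le i hi
  · rw [← cutWeight_compl hsymm, hZi]; exact hstar_le i hi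
  · have hkR : (k : ℝ) ≤ Lᶜ.ncard := by
      exact_mod_cast hk ▸ Set.ncard_le_ncard (hSR i₀ hi₀)
    nlinarith

end Bipartite

end

open Classical in
theorem stmt_19 {V : Type*} [Fintype V] (n : ℕ) (hn8 : 8 ≤ n) (hn4 : 4 ∣ n)
    (hcard : Fintype.card V = n)
    (ε : ℝ) (hε0 : 0 < ε) (hε1 : ε ≤ 1)
    -- the bipartition `L ⊔ R` with `|L| = 3n/4`, `R = Lᶜ` of size `n/4`
    (L : Set V) (hL : L.ncard = 3 * n / 4)
    -- for each `i ∈ L`, the block `x^(i)` is encoded by the set `S i ⊆ R` of its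
    -- `(1+ε)`-weight neighbors; each block has Hamming weight `⌊n/8⌋ − 1` or `⌊n/8⌋ + 1`
    (S : V → Set V) (hSR : ∀ i ∈ L, S i ⊆ Lᶜ)
    (hSwt : ∀ i ∈ L, (S i).ncard = n / 8 - 1 ∨ (S i).ncard = n / 8 + 1)
    -- the weight function of `G_x`
    (w : V → V → ℝ) (hsymm : ∀ a b, w a b = w b a)
    (hinL : ∀ a ∈ L, ∀ b ∈ L, w a b = 0)
    (hinR : ∀ a ∉ L, ∀ b ∉ L, w a b = 0)
    (hcross : ∀ i ∈ L, ∀ j ∉ L, w i j = 1 + if j ∈ S i then ε else 0) :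
    -- if every block is in `Y` then `λ(G_x) = n/4 + ε(⌊n/8⌋ + 1)`
    ((∀ i ∈ L, (S i).ncard = n / 8 + 1) →
      IsLeast {y : ℝ | ∃ Z : Set V, Z ≠ ∅ ∧ Z ≠ Set.univ ∧ y = cutWeight w Z}
        ((n : ℝ) / 4 + ε * ((n / 8 : ℕ) + 1))) ∧
    -- if some block is in `X` then `λ(G_x) = n/4 + ε(⌊n/8⌋ − 1)`
    ((∃ i ∈ L, (S i).ncard = n / 8 - 1) →
      IsLeast {y : ℝ | ∃ Z : Set V, Z ≠ ∅ ∧ Z ≠ Set.univ ∧ y = cutWeight w Z}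
        ((n : ℝ) / 4 + ε * ((n / 8 : ℕ) - 1))) := by
  have hR : Lᶜ.ncard = n / 4 := by
    have := Set.ncard_add_ncard_compl L
    rw [Nat.card_eq_fintype_card, hcard] at this
    omega
  have hRreal : (Lᶜ.ncard : ℝ) = n / 4 := by
    rw [hR, Nat.cast_div hn4 (by norm_num)]
    norm_num
  have hRne : Lᶜ.Nonempty := Set.nonempty_of_ncard_ne_zero (by omega)
  have key := fun {k : ℕ} {i : V} (hi : i ∈ L) (hk : (S i).ncard = k)
      (hmin : ∀ j ∈ L, k ≤ (S j).ncard) =>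
    hRreal ▸ isLeast_cutWeight (by omega) hRne hε0.le hε1 hSR hsymm hinL hinR hcross hi hk hmin
  refine ⟨fun hall => ?_, fun ⟨i, hi, hSi⟩ => ?_⟩
  · obtain ⟨i₀, hi₀⟩ : L.Nonempty := Set.nonempty_of_ncard_ne_zero (by omega)
    exact_mod_cast key hi₀ (hall i₀ hi₀) (fun j hj => (hall j hj).ge)
  · have := key hi hSi (fun j hj => by have := hSwt j hj; omega)
    rwa [Nat.cast_sub (by omega : 1 ≤ n / 8), Nat.cast_one] at this
end
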